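/- For every ε > 0 there exists τ₀ ∈ (0, 1/4] such that for all τ ∈ (0, τ₀): 1 − ε < τ^2·|q₁(τ)| ≤ 1 and 1 ≤ (2/τ)·|q₂(τ)| ≤ 1 + ε. -/

import Mathlib

open Real Complex

noncomputable def Ppoly (τ : ℝ) (z : ℂ) : ℂ :=
  z ^ 3 + (Complex.I - 1 / (4 * (π : ℂ)) - Complex.I / (τ : ℂ) ^ 2) * z ^ 2
    - z / 4 - Complex.I / 4

/-! Large root: `τ² (I/τ² + 1/(4π) - I) = τ²/(4π) + (1 - τ²) I` has modulus between `1 - τ²` and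
`1 - τ²/2`, and `τ² q₁` lies within `τ⁴/2` of it.

Small root: in the variable `w = q₂ / (I τ / 2)` the equation reads `w² = 1 + τ w / 2 + O(τ²)`.
Near `w = 1` the factor `w + 1` is bounded below, giving `‖w - 1‖ ≤ τ / 2`, and
`‖w‖² ≥ Re w² ≥ 1 + (τ/2) Re w - O(τ²) > 1`. -/

theorem sq_mul_norm_bounds_of_near_I_div_sq {τ : ℝ} (hτ : 0 < τ) (hτ1 : τ ≤ 1) {q : ℂ}
    (hq : ‖q - (I / (τ : ℂ) ^ 2 + 1 / (4 * (π : ℂ)) - I)‖ ≤ τ ^ 2 / 2) :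
    1 - τ ^ 2 - τ ^ 4 / 2 ≤ τ ^ 2 * ‖q‖ ∧ τ ^ 2 * ‖q‖ ≤ 1 := by
  set z₀ : ℂ := ((τ ^ 2 / (4 * π) : ℝ) : ℂ) + ((1 - τ ^ 2 : ℝ) : ℂ) * I
  have hτ2 : (0 : ℝ) ≤ τ ^ 2 := by positivity
  have hclose : ‖((τ ^ 2 : ℝ) : ℂ) * q - z₀‖ ≤ τ ^ 4 / 2 := by
    have hτc : (τ : ℂ) ≠ 0 := by exact_mod_cast hτ.ne'
    have hπc : (π : ℂ) ≠ 0 := by exact_mod_cast pi_ne_zero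
    have hrescale : ((τ ^ 2 : ℝ) : ℂ) * q - z₀
        = ((τ ^ 2 : ℝ) : ℂ) * (q - (I / (τ : ℂ) ^ 2 + 1 / (4 * (π : ℂ)) - I)) := by
      simp only [z₀]; push_cast; field_simp; ring
    rw [hrescale, norm_mul, Complex.norm_of_nonneg hτ2]
    nlinarith
  have hlower : 1 - τ ^ 2 ≤ ‖z₀‖ := by
    have him : z₀.im = 1 - τ ^ 2 := by
      simp only [z₀, add_im, ofReal_im, mul_im, ofReal_re, I_re, I_im]; ring
    linarith [le_abs_self z₀.im, abs_im_le_norm z₀]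
  have hupper : ‖z₀‖ ≤ 1 - τ ^ 2 / 2 := by
    have hsmall : τ ^ 2 / (4 * π) ≤ τ ^ 2 / 2 := by
      gcongr; linarith [pi_gt_three]
    calc ‖z₀‖ ≤ τ ^ 2 / (4 * π) + (1 - τ ^ 2) := by
          refine (norm_add_le _ _).trans_eq ?_
          rw [norm_mul, norm_I, mul_one, Complex.norm_of_nonneg (by positivity),
            Complex.norm_of_nonneg (by nlinarith)]
      _ ≤ 1 - τ ^ 2 / 2 := by linarith
  have h1 := norm_le_norm_add_norm_sub (((τ ^ 2 : ℝ) : ℂ) * q) z₀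
  have h2 := norm_le_norm_add_norm_sub' (((τ ^ 2 : ℝ) : ℂ) * q) z₀
  rw [norm_mul, Complex.norm_of_nonneg hτ2] at h1 h2
  have hτ4 : τ ^ 4 ≤ τ ^ 2 := pow_le_pow_of_le_one hτ.le hτ1 (by norm_num)
  constructor <;> linarith

theorem sq_sub_one_sub_eq_of_Ppoly_eq_zero {τ : ℝ} (hτ : τ ≠ 0) {w : ℂ}
    (h : Ppoly τ (I * τ * w / 2) = 0) :
    w ^ 2 - 1 - τ * w / 2 = τ ^ 2 * w ^ 2 * (1 + I / (4 * π)) + τ ^ 3 * w ^ 3 / 2 := by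
  have hu : I / (τ : ℂ) ^ 2 * (τ : ℂ) ^ 2 = I :=
    div_mul_cancel₀ _ (by exact_mod_cast pow_ne_zero 2 hτ)
  unfold Ppoly at h
  linear_combination (-4 * I) * h - (I ^ 3 * w ^ 2) * hu
    - ((I ^ 2 - 1) * (-τ ^ 3 * w ^ 3 / 2 - τ ^ 2 * w ^ 2 + w ^ 2)
      + I * τ ^ 2 * w ^ 2 * (1 / (4 * π)) + τ * w / 2 + 1) * I_sq

theorem norm_rescaled_remainder_le {τ : ℝ} (hτ : 0 ≤ τ) (hτ' : τ ≤ 1 / 10) {w : ℂ}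
    (hw : ‖w‖ ≤ 6 / 5) :
    ‖(τ : ℂ) ^ 2 * w ^ 2 * (1 + I / (4 * π)) + τ ^ 3 * w ^ 3 / 2‖ ≤ 2 * τ ^ 2 := by
  have hκ : ‖1 + I / (4 * (π : ℂ))‖ ≤ 5 / 4 := by
    have hπ : ‖I / (4 * (π : ℂ))‖ = 1 / (4 * π) := by
      rw [norm_div, norm_I, norm_mul, Complex.norm_of_nonneg pi_pos.le]; norm_num
    have : 1 / (4 * π) ≤ 1 / 4 := by gcongr; linarith [pi_gt_three]
    linarith [norm_add_le 1 (I / (4 * (π : ℂ))), norm_one (α := ℂ)]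
  have hw2 : ‖w‖ ^ 2 ≤ (6 / 5) ^ 2 := by gcongr
  have hw3 : ‖w‖ ^ 3 ≤ (6 / 5) ^ 3 := by gcongr
  have hquad : ‖(τ : ℂ) ^ 2 * w ^ 2 * (1 + I / (4 * π))‖ ≤ 9 / 5 * τ ^ 2 := by
    rw [norm_mul, norm_mul, norm_pow, norm_pow, Complex.norm_of_nonneg hτ]
    calc τ ^ 2 * ‖w‖ ^ 2 * ‖1 + I / (4 * (π : ℂ))‖ ≤ τ ^ 2 * (6 / 5) ^ 2 * (5 / 4) := by gcongr
      _ = 9 / 5 * τ ^ 2 := by ring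
  have hcubic : ‖(τ : ℂ) ^ 3 * w ^ 3 / 2‖ ≤ 1 / 5 * τ ^ 2 := by
    rw [norm_div, norm_mul, norm_pow, norm_pow, Complex.norm_of_nonneg hτ, Complex.norm_two]
    calc τ ^ 3 * ‖w‖ ^ 3 / 2 ≤ τ ^ 2 * (1 / 10) * (6 / 5) ^ 3 / 2 := by
          rw [pow_succ τ 2]; gcongr
      _ ≤ 1 / 5 * τ ^ 2 := by nlinarith [sq_nonneg τ]
  linarith [norm_add_le ((τ : ℂ) ^ 2 * w ^ 2 * (1 + I / (4 * π))) ((τ : ℂ) ^ 3 * w ^ 3 / 2)]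

theorem norm_sub_one_le_of_norm_sq_sub_le {τ : ℝ} (hτ : 0 ≤ τ) (hτ' : τ ≤ 1 / 10) {w : ℂ}
    (hw : ‖w - 1‖ ≤ 1 / 5) (h : ‖w ^ 2 - 1 - τ * w / 2‖ ≤ 2 * τ ^ 2) :
    ‖w - 1‖ ≤ τ / 2 := by
  have hw_le : ‖w‖ ≤ 6 / 5 := by
    linarith [norm_le_norm_add_norm_sub' w 1, norm_one (α := ℂ)]
  have hw_add : 9 / 5 ≤ ‖w + 1‖ := by
    have := norm_le_norm_add_norm_sub (w + 1) 2
    rw [show w + 1 - 2 = w - 1 by ring, Complex.norm_two] at this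
    linarith
  have hlin : ‖(τ : ℂ) * w / 2‖ ≤ 3 / 5 * τ := by
    rw [norm_div, norm_mul, Complex.norm_of_nonneg hτ, Complex.norm_two]
    nlinarith
  have hsq : ‖w - 1‖ * ‖w + 1‖ ≤ 4 / 5 * τ := by
    rw [← norm_mul, show (w - 1) * (w + 1) = (w ^ 2 - 1 - τ * w / 2) + τ * w / 2 by ring]
    nlinarith [norm_add_le (w ^ 2 - 1 - τ * w / 2) ((τ : ℂ) * w / 2)]
  nlinarith [norm_nonneg (w - 1)]

theorem one_lt_norm_of_norm_sq_sub_le {τ : ℝ} (hτ : 0 < τ) (hτ' : τ < 1 / 5) {w : ℂ}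
    (hw : ‖w - 1‖ ≤ 1 / 5) (h : ‖w ^ 2 - 1 - τ * w / 2‖ ≤ 2 * τ ^ 2) :
    1 < ‖w‖ := by
  have hre : 4 / 5 ≤ w.re := by
    have := abs_re_le_norm (w - 1)
    rw [sub_re, one_re] at this
    linarith [neg_abs_le (w.re - 1)]
  have hrem : -(2 * τ ^ 2) ≤ (w ^ 2 - 1 - τ * w / 2).re := by
    linarith [neg_abs_le (w ^ 2 - 1 - τ * w / 2).re, abs_re_le_norm (w ^ 2 - 1 - τ * w / 2)]
  have hsq_re : (w ^ 2).re = (w ^ 2 - 1 - τ * w / 2).re + 1 + τ / 2 * w.re := by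
    simp only [sub_re, one_re, div_re, mul_re, ofReal_re, ofReal_im]
    norm_num; ring
  have hsq : 1 < ‖w‖ ^ 2 := by
    rw [← norm_pow]
    nlinarith [re_le_norm (w ^ 2)]
  nlinarith [norm_nonneg w]

theorem norm_I_mul_ofReal_mul_div_two {τ : ℝ} (hτ : 0 ≤ τ) (z : ℂ) :
    ‖I * τ * z / 2‖ = τ / 2 * ‖z‖ := by
  rw [norm_div, norm_mul, norm_mul, norm_I, Complex.norm_of_nonneg hτ, Complex.norm_two]
  ring

theorem two_div_mul_norm_bounds_of_near_small_root {τ : ℝ} (hτ : 0 < τ) (hτ' : τ ≤ 1 / 10)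
    {q : ℂ} (hq : ‖q - I * τ / 2‖ < τ / 10) (hP : Ppoly τ q = 0) :
    1 < 2 / τ * ‖q‖ ∧ 2 / τ * ‖q‖ ≤ 1 + τ / 2 := by
  obtain ⟨w, rfl⟩ : ∃ w : ℂ, q = I * τ * w / 2 :=
    ⟨2 * q / (I * τ), by field_simp [I_ne_zero, ofReal_ne_zero.mpr hτ.ne']⟩
  have hw : ‖w - 1‖ ≤ 1 / 5 := by
    rw [show I * τ * w / 2 - I * τ / 2 = I * τ * (w - 1) / 2 by ring,
      norm_I_mul_ofReal_mul_div_two hτ.le] at hq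
    nlinarith [norm_nonneg (w - 1)]
  have hw_le : ‖w‖ ≤ 6 / 5 := by
    linarith [norm_le_norm_add_norm_sub' w 1, norm_one (α := ℂ)]
  have hnear : ‖w ^ 2 - 1 - τ * w / 2‖ ≤ 2 * τ ^ 2 := by
    rw [sq_sub_one_sub_eq_of_Ppoly_eq_zero hτ.ne' hP]
    exact norm_rescaled_remainder_le hτ.le hτ' hw_le
  rw [norm_I_mul_ofReal_mul_div_two hτ.le, ← mul_assoc, div_mul_div_cancel₀' two_ne_zero,
    div_self hτ.ne', one_mul]
  refine ⟨one_lt_norm_of_norm_sq_sub_le hτ (by linarith) hw hnear, ?_⟩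
  linarith [norm_le_norm_add_norm_sub' w 1, norm_one (α := ℂ),
    norm_sub_one_le_of_norm_sq_sub_le hτ.le hτ' hw hnear]

theorem statement8 (ε : ℝ) (hε : 0 < ε) :
    ∃ τ₀ : ℝ, 0 < τ₀ ∧ τ₀ ≤ 1 / 4 ∧
      ∀ τ : ℝ, 0 < τ → τ < τ₀ →
        ∀ q₁ q₂ : ℂ,
          (‖q₁ - (Complex.I / (τ : ℂ) ^ 2 + 1 / (4 * (π : ℂ)) - Complex.I)‖
              ≤ τ ^ 2 / 2 ∧ Ppoly τ q₁ = 0) →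
          (‖q₂ - Complex.I * (τ : ℂ) / 2‖ < τ / 10 ∧ Ppoly τ q₂ = 0) →
          (1 - ε < τ ^ 2 * ‖q₁‖ ∧ τ ^ 2 * ‖q₁‖ ≤ 1 ∧
            1 ≤ (2 / τ) * ‖q₂‖ ∧ (2 / τ) * ‖q₂‖ ≤ 1 + ε) := by
  refine ⟨min (1 / 10) ε, lt_min (by norm_num) hε, (min_le_left _ _).trans (by norm_num), ?_⟩
  rintro τ hτ hτ₀ q₁ q₂ ⟨hq₁, -⟩ ⟨hq₂, hP₂⟩
  have hτ_small : τ < 1 / 10 := hτ₀.trans_le (min_le_left _ _)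
  have hτε : τ < ε := hτ₀.trans_le (min_le_right _ _)
  obtain ⟨h₁_lower, h₁_upper⟩ := sq_mul_norm_bounds_of_near_I_div_sq hτ (by linarith) hq₁
  obtain ⟨h₂_lower, h₂_upper⟩ := two_div_mul_norm_bounds_of_near_small_root hτ hτ_small.le hq₂ hP₂
  refine ⟨?_, h₁_upper, h₂_lower.le, by linarith⟩
  have hτ2 : τ ^ 2 < τ / 10 := by nlinarith
  have hτ4 : τ ^ 4 ≤ τ ^ 2 := pow_le_pow_of_le_one hτ.le (by linarith) (by norm_num)
  linarith
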